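/- Dual feasibility of the primal–dual algorithm (second part of the Lemma): the values y_{i,j}(t) produced by Alg. 1 at the end of slot T satisfy 0 ≤ y_{i,j}(t) ≤ 1/N for all i, j ≤ t, t, and Σ_{i=1}^N 1_{i,k}(t) Σ_{j=1}^t Σ_{τ=t}^T y_{i,j}(τ) ≤ C_k for every k ∈ {1,…,M} and t ∈ {1,…,T}. -/

import Mathlib

open scoped Classical
open MeasureTheory

noncomputable section

/-- Age of information of user `i` under schedule `d`:
`a_i(0) = 0`, and `a_i(t) = 0` if `1_{i,d(t)}(t) = 1`, `a_i(t) = a_i(t-1) + 1` otherwise. -/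
def age (ind : ℕ → ℕ → ℕ → ℝ) (d : ℕ → ℕ) (i : ℕ) : ℕ → ℕ
  | 0 => 0
  | t + 1 => if ind i (d (t + 1)) (t + 1) = 1 then 0 else age ind d i t + 1

/-- Inner loop of Alg. 1 at a fixed slot: `innerLoop Ck θ ps j` is the value of the current
slot's `x`-variable after processing iterations `1, …, j`, where `ps j` is the (final)
contribution `Σ_{τ=j}^{t-1} x_{k*_τ}(τ)` of the earlier slots.  At iteration `j` the current
value of `Σ_{τ=j}^{t} x_{k*_τ}(τ)` is `ps j + innerLoop Ck θ ps (j-1)`; if it is `< 1`, the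
`x`-variable is increased by `(1/Ck) Σ_{τ=j}^{t} x_{k*_τ}(τ) + 1/(θ·Ck)`. -/
def innerLoop (Ck θ : ℝ) (ps : ℕ → ℝ) : ℕ → ℝ
  | 0 => 0
  | j + 1 =>
      if ps (j + 1) + innerLoop Ck θ ps j < 1 then
        innerLoop Ck θ ps j + (ps (j + 1) + innerLoop Ck θ ps j) / Ck + 1 / (θ * Ck)
      else innerLoop Ck θ ps j

/-- `xvec Ck θ t τ` : the value of `x_{k*_τ}(τ)` after Alg. 1 has processed slots `1, …, t`
(`Ck τ` stands for the cost `C_{k*_τ}` used in slot `τ`). -/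
def xvec (Ck : ℕ → ℝ) (θ : ℝ) : ℕ → ℕ → ℝ
  | 0, _ => 0
  | t + 1, τ =>
      if τ = t + 1 then
        innerLoop (Ck (t + 1)) θ (fun j => ∑ σ ∈ Finset.Ico j (t + 1), xvec Ck θ t σ) (t + 1)
      else xvec Ck θ t τ

/-- Final value of `x_{k*_t}(t)` computed by Alg. 1. -/
def xval (Ck : ℕ → ℝ) (θ : ℝ) (t : ℕ) : ℝ := xvec Ck θ t t

/-- `psFun Ck θ t j = Σ_{σ=j}^{t-1} x_{k*_σ}(σ)` (final values of the slots before `t`). -/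
def psFun (Ck : ℕ → ℝ) (θ : ℝ) (t : ℕ) (j : ℕ) : ℝ :=
  ∑ σ ∈ Finset.Ico j t, xvec Ck θ (t - 1) σ

/-- The update condition of Alg. 1 at iteration `j` of slot `t`: the current value of
`Σ_{τ=j}^{t} x_{k*_τ}(τ)` (earlier slots final, slot `t` after iterations `1,…,j-1`) is `< 1`. -/
def algCond (Ck : ℕ → ℝ) (θ : ℝ) (t j : ℕ) : Prop :=
  psFun Ck θ t j + innerLoop (Ck t) θ (psFun Ck θ t) (j - 1) < 1

/-- Final value of `z_{i,j}(t)` computed by Alg. 1 (it is the same for every user `i`). -/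
def zval (Ck : ℕ → ℝ) (θ : ℝ) (j t : ℕ) : ℝ :=
  if algCond Ck θ t j then
    1 - (psFun Ck θ t j + innerLoop (Ck t) θ (psFun Ck θ t) (j - 1))
  else 0

/-- Final value of `y_{i,j}(t)` computed by Alg. 1 (it is the same for every user `i`). -/
def yval (Ck : ℕ → ℝ) (θ : ℝ) (N : ℕ) (j t : ℕ) : ℝ :=
  if algCond Ck θ t j then 1 / N else 0

/-- `k*_t`: the minimum power level `k ≥ 1` with `1_{i,k}(t) = 1` for every user `i`. -/
def kstar (ind : ℕ → ℕ → ℕ → ℝ) (N : ℕ) (t : ℕ) : ℕ :=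
  sInf {k : ℕ | 1 ≤ k ∧ ∀ i ∈ Finset.Icc 1 N, ind i k t = 1}

/-- `X(t) = Σ_{τ=1}^t min{x_{k*_τ}(τ), 1}`, used by Alg. 2 (so `X(0) = 0`). -/
def bigX (Ck : ℕ → ℝ) (θ : ℝ) (t : ℕ) : ℝ :=
  ∑ τ ∈ Finset.Icc 1 t, min (xval Ck θ τ) 1

/-- Alg. 2 transmits in slot `t` for randomness `u` iff `u + k ∈ [X(t-1), X(t))` for some
integer `k ≥ 0`. -/
def transmits (Ck : ℕ → ℝ) (θ : ℝ) (u : ℝ) (t : ℕ) : Prop :=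
  ∃ k : ℕ, bigX Ck θ (t - 1) ≤ u + k ∧ u + k < bigX Ck θ t

/-- The decision of Alg. 2 in slot `t` for randomness `u`: transmit with power `k*_t`, or idle. -/
def dAlg (ind : ℕ → ℕ → ℕ → ℝ) (N : ℕ) (Ck : ℕ → ℝ) (θ : ℝ) (u : ℝ) (t : ℕ) : ℕ :=
  if transmits Ck θ u t then kstar ind N t else 0

/-- The constant `θ = (1 + 1/C_M)^⌊C_1⌋ − 1` of Alg. 1. -/
def thetaOf (C : ℕ → ℝ) (M : ℕ) : ℝ := (1 + 1 / C M) ^ ⌊C 1⌋ - 1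

/-! Fix `t`. The left side of the dual constraint for `(k, t)` is at most the number of
updates `(τ, j)` of Alg. 1 with `τ ≥ t` and `j ≤ t`, so it suffices to bound that number by
`⌊C_1⌋ ≤ C_1 ≤ C_k`. Sweep these updates in the order the algorithm performs them and watch
`S = Σ_{σ=t}^{τ} x_{k*_σ}(σ)`: it never decreases, an update `(τ, j)` only happens while
`S ≤ Σ_{σ=j}^{τ} x_{k*_σ}(σ) < 1`, and each update multiplies the potential `θ S + 1` by at
least `1 + 1/C_M`. As the potential starts at `1` and stays below `θ + 1 = (1 + 1/C_M)^⌊C_1⌋`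
before every update, there are at most `⌊C_1⌋` updates. -/

section PotentialCounting

variable {ι : Type*} [LinearOrder ι] {φ ψ : ι → ℝ} {u : ℝ}

theorem pow_card_le_of_chain (hu : 0 ≤ u) (s : Finset ι) (hφ : ∀ e ∈ s, 1 ≤ φ e)
    (hgrow : ∀ e ∈ s, u * φ e ≤ ψ e) (hchain : ∀ e ∈ s, ∀ e' ∈ s, e < e' → ψ e ≤ φ e')
    {b : ℝ} (hb : 1 ≤ b) (hψb : ∀ e ∈ s, ψ e ≤ b) : u ^ s.card ≤ b := by
  induction s using Finset.induction_on_max generalizing b with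
  | empty => simpa using hb
  | insert a s hlt ih =>
    have ha : a ∈ insert a s := Finset.mem_insert_self a s
    have hsub : s ⊆ insert a s := Finset.subset_insert a s
    have hpow : u ^ s.card ≤ φ a :=
      ih (fun e he => hφ e (hsub he)) (fun e he => hgrow e (hsub he))
        (fun e he e' he' => hchain e (hsub he) e' (hsub he')) (hφ a ha)
        (fun e he => hchain e (hsub he) a ha (hlt e he))
    rw [Finset.card_insert_of_notMem fun h => (hlt a h).false, pow_succ]
    calc u ^ s.card * u ≤ φ a * u := mul_le_mul_of_nonneg_right hpow hu
      _ = u * φ a := mul_comm _ _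
      _ ≤ ψ a := hgrow a ha
      _ ≤ b := hψb a ha

theorem card_le_of_chain (hu : 1 ≤ u) {F : ℕ} (s : Finset ι) (hφ : ∀ e ∈ s, 1 ≤ φ e)
    (hφF : ∀ e ∈ s, φ e < u ^ F) (hgrow : ∀ e ∈ s, u * φ e ≤ ψ e)
    (hchain : ∀ e ∈ s, ∀ e' ∈ s, e < e' → ψ e ≤ φ e') : s.card ≤ F := by
  rcases s.eq_empty_or_nonempty with rfl | hne
  · simp
  set m := s.max' hne
  have hm : m ∈ s := s.max'_mem hne
  have hsub : s.erase m ⊆ s := Finset.erase_subset m s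
  have hpow : u ^ (s.erase m).card ≤ φ m :=
    pow_card_le_of_chain (zero_le_one.trans hu) _ (fun e he => hφ e (hsub he))
      (fun e he => hgrow e (hsub he)) (fun e he e' he' => hchain e (hsub he) e' (hsub he'))
      (hφ m hm) (fun e he => hchain e (hsub he) m hm (s.lt_max'_of_mem_erase_max' hne he))
  have hlt : (s.erase m).card < F := by
    by_contra! h
    exact (hpow.trans_lt (hφF m hm)).not_ge (pow_le_pow_right₀ hu h)
  rw [Finset.card_erase_of_mem hm] at hlt
  have := Finset.card_pos.2 hne
  omega

end PotentialCounting

section InnerLoop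

variable {Cc θ : ℝ} {ps : ℕ → ℝ}

theorem innerLoop_nonneg (hC : 0 ≤ Cc) (hθ : 0 ≤ θ) (hps : ∀ j, 0 ≤ ps j) (j : ℕ) :
    0 ≤ innerLoop Cc θ ps j := by
  induction j with
  | zero => simp [innerLoop]
  | succ n ih =>
    rw [innerLoop]
    split_ifs
    · have := hps (n + 1)
      positivity
    · exact ih

theorem innerLoop_monotone (hC : 0 ≤ Cc) (hθ : 0 ≤ θ) (hps : ∀ j, 0 ≤ ps j) :
    Monotone (innerLoop Cc θ ps) := by
  refine monotone_nat_of_le_succ fun n => ?_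
  have := innerLoop_nonneg hC hθ hps n
  have := hps (n + 1)
  rw [innerLoop]
  split_ifs
  · have : 0 ≤ (ps (n + 1) + innerLoop Cc θ ps n) / Cc + 1 / (θ * Cc) := by positivity
    linarith
  · exact le_rfl

end InnerLoop

section Algorithm

variable {Ck : ℕ → ℝ} {θ : ℝ}

theorem xvec_nonneg (hC : ∀ τ, 0 ≤ Ck τ) (hθ : 0 ≤ θ) (t τ : ℕ) : 0 ≤ xvec Ck θ t τ := by
  induction t generalizing τ with
  | zero => simp [xvec]
  | succ s ih =>
    rw [xvec]
    split_ifs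
    · exact innerLoop_nonneg (hC _) hθ (fun j => Finset.sum_nonneg fun σ _ => ih σ) _
    · exact ih τ

theorem xval_nonneg (hC : ∀ τ, 0 ≤ Ck τ) (hθ : 0 ≤ θ) (τ : ℕ) : 0 ≤ xval Ck θ τ :=
  xvec_nonneg hC hθ τ τ

theorem xvec_eq_xval {τ s : ℕ} (h : τ ≤ s) : xvec Ck θ s τ = xval Ck θ τ := by
  induction s, h using Nat.le_induction with
  | base => rfl
  | succ s hs ih => rw [xvec, if_neg (by omega), ih]

theorem psFun_eq_sum_xval (t j : ℕ) : psFun Ck θ t j = ∑ σ ∈ Finset.Ico j t, xval Ck θ σ :=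
  Finset.sum_congr rfl fun σ hσ => xvec_eq_xval (by have := (Finset.mem_Ico.1 hσ).2; omega)

theorem psFun_nonneg (hC : ∀ τ, 0 ≤ Ck τ) (hθ : 0 ≤ θ) (t j : ℕ) : 0 ≤ psFun Ck θ t j :=
  Finset.sum_nonneg fun σ _ => xvec_nonneg hC hθ _ σ

theorem xval_eq_innerLoop (τ : ℕ) :
    xval Ck θ τ = innerLoop (Ck τ) θ (psFun Ck θ τ) τ := by
  cases τ with
  | zero => simp [xval, xvec, innerLoop]
  | succ s =>
    rw [xval, xvec, if_pos rfl]
    rfl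

/-- The current value of `Σ_{σ=t}^{τ} x_{k*_σ}(σ)` after iteration `j` of slot `τ`. -/
def runningTotal (Ck : ℕ → ℝ) (θ : ℝ) (t τ j : ℕ) : ℝ :=
  ∑ σ ∈ Finset.Ico t τ, xval Ck θ σ + innerLoop (Ck τ) θ (psFun Ck θ τ) j

variable {t : ℕ}

theorem runningTotal_nonneg (hC : ∀ τ, 0 ≤ Ck τ) (hθ : 0 ≤ θ) (τ j : ℕ) :
    0 ≤ runningTotal Ck θ t τ j :=
  add_nonneg (Finset.sum_nonneg fun σ _ => xval_nonneg hC hθ σ)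
    (innerLoop_nonneg (hC τ) hθ (psFun_nonneg hC hθ τ) j)

theorem runningTotal_monotone (hC : ∀ τ, 0 ≤ Ck τ) (hθ : 0 ≤ θ) (τ : ℕ) :
    Monotone (runningTotal Ck θ t τ) := fun _ _ hj =>
  add_le_add_right (innerLoop_monotone (hC τ) hθ (psFun_nonneg hC hθ τ) hj) _

theorem runningTotal_self {τ : ℕ} (hτ : t ≤ τ) :
    runningTotal Ck θ t τ τ = ∑ σ ∈ Finset.Ico t (τ + 1), xval Ck θ σ := by
  rw [runningTotal, ← xval_eq_innerLoop, Finset.sum_Ico_succ_top hτ]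

theorem runningTotal_le_of_lex (hC : ∀ τ, 0 ≤ Ck τ) (hθ : 0 ≤ θ) {τ j τ' j' : ℕ}
    (hj : j ≤ t) (hτ : t ≤ τ) (hlex : τ < τ' ∨ τ = τ' ∧ j < j') :
    runningTotal Ck θ t τ j ≤ runningTotal Ck θ t τ' (j' - 1) := by
  rcases hlex with hττ' | ⟨rfl, hjj'⟩
  · calc runningTotal Ck θ t τ j ≤ runningTotal Ck θ t τ τ :=
          runningTotal_monotone hC hθ τ (hj.trans hτ)
      _ = ∑ σ ∈ Finset.Ico t (τ + 1), xval Ck θ σ := runningTotal_self hτ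
      _ ≤ ∑ σ ∈ Finset.Ico t τ', xval Ck θ σ :=
          Finset.sum_le_sum_of_subset_of_nonneg (Finset.Ico_subset_Ico le_rfl hττ')
            fun σ _ _ => xval_nonneg hC hθ σ
      _ ≤ runningTotal Ck θ t τ' (j' - 1) :=
          le_add_of_nonneg_right (innerLoop_nonneg (hC τ') hθ (psFun_nonneg hC hθ τ') _)
  · exact runningTotal_monotone hC hθ τ (by omega)

theorem sum_Ico_xval_le_psFun (hC : ∀ τ, 0 ≤ Ck τ) (hθ : 0 ≤ θ) {τ j : ℕ} (hj : j ≤ t) :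
    ∑ σ ∈ Finset.Ico t τ, xval Ck θ σ ≤ psFun Ck θ τ j := by
  rw [psFun_eq_sum_xval]
  exact Finset.sum_le_sum_of_subset_of_nonneg (Finset.Ico_subset_Ico hj le_rfl)
    fun σ _ _ => xval_nonneg hC hθ σ

theorem runningTotal_lt_one (hC : ∀ τ, 0 ≤ Ck τ) (hθ : 0 ≤ θ) {τ j : ℕ} (hj : j ≤ t)
    (hcond : algCond Ck θ τ j) : runningTotal Ck θ t τ (j - 1) < 1 := by
  have := sum_Ico_xval_le_psFun hC hθ (τ := τ) hj
  rw [algCond] at hcond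
  rw [runningTotal]
  linarith

theorem runningTotal_potential_growth (hC : ∀ τ, 0 < Ck τ) (hθ : 0 < θ) {CM : ℝ} {τ j : ℕ}
    (hCM : Ck τ ≤ CM) (hj₁ : 1 ≤ j) (hj : j ≤ t) (hcond : algCond Ck θ τ j) :
    (1 + 1 / CM) * (θ * runningTotal Ck θ t τ (j - 1) + 1) ≤
      θ * runningTotal Ck θ t τ j + 1 := by
  have hC₀ : ∀ τ, 0 ≤ Ck τ := fun τ => (hC τ).le
  obtain ⟨j, rfl⟩ : ∃ j₀, j = j₀ + 1 := ⟨j - 1, by omega⟩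
  rw [Nat.add_sub_cancel]
  rw [algCond, Nat.add_sub_cancel] at hcond
  set ps := psFun Ck θ τ (j + 1)
  set IL := innerLoop (Ck τ) θ (psFun Ck θ τ) j
  set A := ∑ σ ∈ Finset.Ico t τ, xval Ck θ σ
  have hA : A ≤ ps := sum_Ico_xval_le_psFun hC₀ hθ.le hj
  have hA₀ : 0 ≤ A := Finset.sum_nonneg fun σ _ => xval_nonneg hC₀ hθ.le σ
  have hIL₀ : 0 ≤ IL := innerLoop_nonneg (hC₀ τ) hθ.le (psFun_nonneg hC₀ hθ.le τ) j
  have hstep : runningTotal Ck θ t τ (j + 1) = A + IL + (ps + IL) / Ck τ + 1 / (θ * Ck τ) := by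
    rw [runningTotal, innerLoop, if_pos hcond]
    ring
  have hCτ := hC τ
  have hnum : θ * (A + IL) + 1 ≤ θ * (ps + IL) + 1 := by gcongr
  have hnum₀ : 0 ≤ θ * (A + IL) + 1 := by positivity
  calc (1 + 1 / CM) * (θ * runningTotal Ck θ t τ j + 1)
      = θ * (A + IL) + 1 + (θ * (A + IL) + 1) / CM := by rw [runningTotal]; ring
    _ ≤ θ * (A + IL) + 1 + (θ * (ps + IL) + 1) / Ck τ := by
        gcongr (θ * (A + IL) + 1 + ?_)
        exact div_le_div₀ (hnum₀.trans hnum) hnum hCτ hCM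
    _ = θ * runningTotal Ck θ t τ (j + 1) + 1 := by
        rw [hstep]
        field_simp
        ring

theorem card_algCond_le (hC : ∀ τ, 0 < Ck τ) (hθ : 0 < θ) {CM : ℝ} (hCM : ∀ τ, Ck τ ≤ CM)
    {F : ℕ} (hF : θ + 1 ≤ (1 + 1 / CM) ^ F) (T : ℕ) :
    ((Finset.Icc t T ×ˢ Finset.Icc 1 t).filter fun p => algCond Ck θ p.1 p.2).card ≤ F := by
  have hC₀ : ∀ τ, 0 ≤ Ck τ := fun τ => (hC τ).le
  have hu : 1 ≤ 1 + 1 / CM := le_add_of_nonneg_right (one_div_nonneg.2 ((hC 0).le.trans (hCM 0)))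
  -- Alg. 1 performs the updates `(τ, j)` in lexicographic order.
  rw [← Finset.card_map toLex.toEmbedding]
  refine card_le_of_chain hu _
    (φ := fun e => θ * runningTotal Ck θ t (ofLex e).1 ((ofLex e).2 - 1) + 1)
    (ψ := fun e => θ * runningTotal Ck θ t (ofLex e).1 (ofLex e).2 + 1) ?_ ?_ ?_ ?_ <;>
    simp only [Finset.forall_mem_map, Finset.mem_filter, Finset.mem_product, Finset.mem_Icc,
      Equiv.coe_toEmbedding, ofLex_toLex, Prod.forall, and_imp]
  · intro τ j _ _ _ _ _
    have := runningTotal_nonneg hC₀ hθ.le (t := t) τ (j - 1)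
    nlinarith
  · intro τ j _ _ _ hj hcond
    have := runningTotal_lt_one hC₀ hθ.le hj hcond
    nlinarith
  · intro τ j _ _ hj₁ hj hcond
    exact runningTotal_potential_growth hC hθ (hCM τ) hj₁ hj hcond
  · intro τ j hτ _ _ hj _ τ' j' _ _ _ _ _ hlex
    have := runningTotal_le_of_lex hC₀ hθ.le hj hτ (Prod.Lex.toLex_lt_toLex.1 hlex)
    gcongr

end Algorithm

theorem cost_kstar_mem_Icc {ind : ℕ → ℕ → ℕ → ℝ} {N M : ℕ} (hM : 1 ≤ M) {t : ℕ}
    (hcov : ∀ i ∈ Finset.Icc 1 N, ind i M t = 1) {C : ℕ → ℝ}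
    (hCmono : ∀ k k', 1 ≤ k → k ≤ k' → k' ≤ M → C k ≤ C k') :
    C (kstar ind N t) ∈ Set.Icc (C 1) (C M) := by
  have hmem : M ∈ {k : ℕ | 1 ≤ k ∧ ∀ i ∈ Finset.Icc 1 N, ind i k t = 1} := ⟨hM, hcov⟩
  have h₁ : 1 ≤ kstar ind N t := (Nat.sInf_mem ⟨M, hmem⟩).1
  have h₂ : kstar ind N t ≤ M := Nat.sInf_le hmem
  exact ⟨hCmono 1 _ le_rfl h₁ h₂, hCmono _ M h₁ h₂ le_rfl⟩

theorem thetaOf_add_one {C : ℕ → ℝ} (hC1 : 0 ≤ C 1) (M : ℕ) :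
    thetaOf C M + 1 = (1 + 1 / C M) ^ ⌊C 1⌋₊ := by
  rw [thetaOf, ← Int.natCast_floor_eq_floor hC1, zpow_natCast, sub_add_cancel]

theorem thetaOf_pos {C : ℕ → ℝ} (hC1 : 1 ≤ C 1) {M : ℕ} (hCM : 0 < C M) : 0 < thetaOf C M := by
  have : 1 < (1 + 1 / C M) ^ ⌊C 1⌋₊ :=
    one_lt_pow₀ (lt_add_of_pos_right 1 (one_div_pos.2 hCM))
      (Nat.one_le_iff_ne_zero.1 ((Nat.one_le_floor_iff _).2 hC1))
  linarith [thetaOf_add_one (zero_le_one.trans hC1) M]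

theorem yval_mem_Icc (Ck : ℕ → ℝ) (θ : ℝ) (N j t : ℕ) :
    yval Ck θ N j t ∈ Set.Icc 0 (1 / (N : ℝ)) := by
  rw [yval]
  split_ifs
  · exact ⟨by positivity, le_rfl⟩
  · exact ⟨le_rfl, by positivity⟩

theorem sum_yval_eq_card (Ck : ℕ → ℝ) (θ : ℝ) (N t T : ℕ) :
    ∑ j ∈ Finset.Icc 1 t, ∑ τ ∈ Finset.Icc t T, yval Ck θ N j τ =
      ((Finset.Icc t T ×ˢ Finset.Icc 1 t).filter fun p => algCond Ck θ p.1 p.2).card / N := by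
  rw [Finset.sum_comm, ← Finset.sum_product', Finset.card_filter, Nat.cast_sum, Finset.sum_div]
  refine Finset.sum_congr rfl fun p _ => ?_
  rw [yval]
  split_ifs <;> simp

theorem sum_Icc_mul_div_le {a : ℕ → ℝ} (ha : ∀ i, a i ≤ 1) {c : ℝ} (hc : 0 ≤ c) (N : ℕ) :
    ∑ i ∈ Finset.Icc 1 N, a i * (c / N) ≤ c := by
  calc ∑ i ∈ Finset.Icc 1 N, a i * (c / N)
      ≤ ∑ _i ∈ Finset.Icc 1 N, c / N :=
        Finset.sum_le_sum fun i _ => mul_le_of_le_one_left (by positivity) (ha i)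
    _ = c * (N / N) := by
        rw [Finset.sum_const, Nat.card_Icc, Nat.add_sub_cancel, nsmul_eq_mul]
        ring
    _ ≤ c := mul_le_of_le_one_right hc (div_self_le_one _)

theorem stmt5_general (N M T : ℕ) (hM : 1 ≤ M)
    (ind : ℕ → ℕ → ℕ → ℝ)
    (hind01 : ∀ i k t, ind i k t = 0 ∨ ind i k t = 1)
    (hcov : ∀ i t, ind i M t = 1)
    (C : ℕ → ℝ) (hC1 : 1 ≤ C 1)
    (hCmono : ∀ k k', 1 ≤ k → k ≤ k' → k' ≤ M → C k ≤ C k') :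
    (∀ j t : ℕ,
      0 ≤ yval (fun τ => C (kstar ind N τ)) (thetaOf C M) N j t ∧
      yval (fun τ => C (kstar ind N τ)) (thetaOf C M) N j t ≤ 1 / N) ∧
    (∀ k ∈ Finset.Icc 1 M, ∀ t ∈ Finset.Icc 1 T,
      ∑ i ∈ Finset.Icc 1 N,
          ind i k t * ∑ j ∈ Finset.Icc 1 t, ∑ τ ∈ Finset.Icc t T,
            yval (fun σ => C (kstar ind N σ)) (thetaOf C M) N j τ
        ≤ C k) := by
  refine ⟨fun j t => yval_mem_Icc _ _ N j t, fun k hk t _ => ?_⟩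
  obtain ⟨hk₁, hkM⟩ := Finset.mem_Icc.1 hk
  have hCk : ∀ τ, C (kstar ind N τ) ∈ Set.Icc (C 1) (C M) :=
    fun τ => cost_kstar_mem_Icc hM (fun i _ => hcov i τ) hCmono
  have hCk₀ : ∀ τ, 0 < C (kstar ind N τ) := fun τ => by linarith [(hCk τ).1]
  have hind : ∀ i, ind i k t ≤ 1 := fun i =>
    (hind01 i k t).elim (·.trans_le zero_le_one) (·.le)
  rw [sum_yval_eq_card]
  calc _ ≤ (_ : ℝ) := sum_Icc_mul_div_le hind (Nat.cast_nonneg _) N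
    _ ≤ ⌊C 1⌋₊ := by
        exact_mod_cast card_algCond_le hCk₀ (thetaOf_pos hC1 ((hCk₀ 0).trans_le (hCk 0).2))
          (fun τ => (hCk τ).2) (thetaOf_add_one (zero_le_one.trans hC1) M).le T
    _ ≤ C 1 := Nat.floor_le (zero_le_one.trans hC1)
    _ ≤ C k := hCmono 1 k le_rfl hk₁ hkM

/-- dual feasibility of the solution produced by Alg. 1: the final values
`y_{i,j}(t)` satisfy `0 ≤ y_{i,j}(t) ≤ 1/N`, and
`Σ_{i=1}^N 1_{i,k}(t) Σ_{j=1}^t Σ_{τ=t}^T y_{i,j}(τ) ≤ C_k` for every `k ∈ {1,…,M}` and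
`t ∈ {1,…,T}`. -/
theorem stmt5 (N M T : ℕ) (hN : 1 ≤ N) (hM : 1 ≤ M) (hT : 1 ≤ T)
    (ind : ℕ → ℕ → ℕ → ℝ)
    (hind01 : ∀ i k t, ind i k t = 0 ∨ ind i k t = 1)
    (hmono : ∀ i k k' t, k ≤ k' → ind i k t = 1 → ind i k' t = 1)
    (hcov : ∀ i t, ind i M t = 1)
    (C : ℕ → ℝ) (hC1 : 1 ≤ C 1)
    (hCmono : ∀ k k', 1 ≤ k → k ≤ k' → k' ≤ M → C k ≤ C k') :
    (∀ j t : ℕ,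
      0 ≤ yval (fun τ => C (kstar ind N τ)) (thetaOf C M) N j t ∧
      yval (fun τ => C (kstar ind N τ)) (thetaOf C M) N j t ≤ 1 / N) ∧
    (∀ k ∈ Finset.Icc 1 M, ∀ t ∈ Finset.Icc 1 T,
      ∑ i ∈ Finset.Icc 1 N,
          ind i k t * ∑ j ∈ Finset.Icc 1 t, ∑ τ ∈ Finset.Icc t T,
            yval (fun σ => C (kstar ind N σ)) (thetaOf C M) N j τ
        ≤ C k) :=
  stmt5_general N M T hM ind hind01 hcov C hC1 hCmono

end
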